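/- Let H be a CNP space on a set X, and let h : X → ℂ be a densely defined multiplier with associated closed operator T and adjoint T*. Then the linear span of the kernel functions {k_x : x ∈ X} is dense in Dom T* with respect to the graph norm ‖f‖² = ‖f‖_H² + ‖T* f‖_H²; equivalently, the set {(k_x, T* k_x) : x ∈ X} spans a dense subspace of the graph of T* inside H ⊕ H. In particular, the span of the kernel functions is a core for T*. -/

import Mathlib

noncomputable section

open scoped ComplexConjugate ENNReal

local notation "⟪" x ", " y "⟫" => @inner ℂ _ _ x y

/-- A reproducing kernel Hilbert space of `ℂ`-valued functions on a set `X`: a complex Hilbert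
space `H` together with an injective linear map realizing its elements as functions `X → ℂ`,
such that every point evaluation is given by inner product against a kernel vector
(equivalently, every evaluation functional is bounded).  Here `⟪kernel x, f⟫ = f x` in
Mathlib's convention (inner products linear in the second variable), i.e. `⟪f, k_x⟫ = f(x)`
in the convention of the paper. -/
structure CRKHS (X : Type) (H : Type) [NormedAddCommGroup H] [InnerProductSpace ℂ H]
    [CompleteSpace H] where
  toFun : H →ₗ[ℂ] (X → ℂ)
  injective : Function.Injective toFun
  kernel : X → H
  reproducing : ∀ (f : H) (x : X), ⟪kernel x, f⟫ = toFun f x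

variable {X H : Type} [NormedAddCommGroup H] [InnerProductSpace ℂ H] [CompleteSpace H]

namespace CRKHS

/-- The reproducing kernel `k(x, y) = ⟪k_y, k_x⟫` (paper convention), which equals
`⟪kernel x, kernel y⟫` in Mathlib's convention. -/
def kFun (R : CRKHS X H) (x y : X) : ℂ := ⟪R.kernel x, R.kernel y⟫

/-- `φ : X → ℂ` is a multiplier of the RKHS: `φ · f ∈ H` for every `f ∈ H`. -/
def IsMult (R : CRKHS X H) (φ : X → ℂ) : Prop :=
  ∀ f : H, ∃ g : H, R.toFun g = fun x => φ x * R.toFun f x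

/-- `M : H →L[ℂ] H` is the bounded multiplication operator induced by the multiplier `φ`. -/
def IsMultOp (R : CRKHS X H) (φ : X → ℂ) (M : H →L[ℂ] H) : Prop :=
  ∀ f : H, R.toFun (M f) = fun x => φ x * R.toFun f x

/-- `H` is a complete Nevanlinna-Pick space: its kernel has the form
`k(x,y) = (1 - ⟨u(x), u(y)⟩)⁻¹` for an injective `u : X → ℓ²(I)` with `‖u x‖ < 1`;
moreover (as noted in the paper) the constant functions belong to `H`. -/
def IsCNP (R : CRKHS X H) : Prop :=
  (∃ (I : Type) (u : X → lp (fun _ : I => ℂ) 2),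
      Function.Injective u ∧ (∀ x, ‖u x‖ < 1) ∧
      ∀ x y : X, R.kFun x y = (1 - ⟪u y, u x⟫)⁻¹) ∧
    ∀ c : ℂ, ∃ g : H, R.toFun g = fun _ => c

/-- The maximal domain `{f ∈ H : h·f ∈ H}` of multiplication by `h`. -/
def mulDomain (R : CRKHS X H) (h : X → ℂ) : Submodule ℂ H where
  carrier := {f : H | ∃ g : H, R.toFun g = fun x => h x * R.toFun f x}
  add_mem' := by
    rintro f₁ f₂ ⟨g₁, hg₁⟩ ⟨g₂, hg₂⟩
    refine ⟨g₁ + g₂, ?_⟩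
    ext x
    simp only [map_add, Pi.add_apply, hg₁, hg₂]
    ring
  zero_mem' := ⟨0, by ext x; simp⟩
  smul_mem' := by
    rintro c f ⟨g, hg⟩
    refine ⟨c • g, ?_⟩
    ext x
    simp only [map_smul, Pi.smul_apply, hg, smul_eq_mul]
    ring

theorem mem_mulDomain {R : CRKHS X H} {h : X → ℂ} {f : H} :
    f ∈ R.mulDomain h ↔ ∃ g : H, R.toFun g = fun x => h x * R.toFun f x := Iff.rfl

/-- Multiplication by `h` as a partially defined linear operator on `H`, with its
maximal domain. -/
def mulOp (R : CRKHS X H) (h : X → ℂ) : H →ₗ.[ℂ] H where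
  domain := R.mulDomain h
  toFun :=
    { toFun := fun f => Classical.choose (mem_mulDomain.mp f.2)
      map_add' := by
        intro f₁ f₂
        apply R.injective
        rw [map_add, Classical.choose_spec (mem_mulDomain.mp f₁.2),
          Classical.choose_spec (mem_mulDomain.mp f₂.2),
          Classical.choose_spec (mem_mulDomain.mp (f₁ + f₂).2)]
        ext x
        simp only [Submodule.coe_add, map_add, Pi.add_apply]
        ring
      map_smul' := by
        intro c f
        apply R.injective
        rw [RingHom.id_apply, map_smul,
          Classical.choose_spec (mem_mulDomain.mp f.2),
          Classical.choose_spec (mem_mulDomain.mp (c • f).2)]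
        ext x
        simp only [Submodule.coe_smul, map_smul, Pi.smul_apply, smul_eq_mul]
        ring }

theorem mulOp_apply (R : CRKHS X H) (h : X → ℂ) (f : (R.mulOp h).domain) :
    R.toFun (R.mulOp h f) = fun x => h x * R.toFun (f : H) x :=
  Classical.choose_spec (mem_mulDomain.mp f.2)

/-- A densely defined operator `T` in `H` is affiliated to `Mult H` if for every `f ∈ Dom T`
and every multiplier `φ` one has `φ·f ∈ Dom T` and `T(φ·f) = φ·(T f)`. -/
def Affiliated (R : CRKHS X H) (T : H →ₗ.[ℂ] H) : Prop :=
  ∀ (φ : X → ℂ), R.IsMult φ →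
    ∀ (f : T.domain) (g : H), R.toFun g = (fun x => φ x * R.toFun (f : H) x) →
      ∃ hg : g ∈ T.domain, R.toFun (T ⟨g, hg⟩) = fun x => φ x * R.toFun (T f) x

/-- A representing pair for a densely defined multiplier `h`: nonzero multipliers `a, b`
with `b = a·h` such that the column `(a, b)` is contractive. -/
def IsRepPair (R : CRKHS X H) (h : X → ℂ) (a b : X → ℂ) : Prop :=
  R.IsMult a ∧ R.IsMult b ∧ a ≠ 0 ∧ b ≠ 0 ∧ (∀ x, b x = a x * h x) ∧
    ∀ (f fa fb : H),
      R.toFun fa = (fun x => a x * R.toFun f x) →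
      R.toFun fb = (fun x => b x * R.toFun f x) →
      ‖fa‖ ^ 2 + ‖fb‖ ^ 2 ≤ ‖f‖ ^ 2

/-- A vector `f ∈ H` is cyclic if `{φ·f : φ ∈ Mult H}` spans a dense subspace of `H`. -/
def IsCyclicVec (R : CRKHS X H) (f : H) : Prop :=
  Dense ((Submodule.span ℂ {g : H | ∃ φ : X → ℂ, R.IsMult φ ∧
    R.toFun g = fun x => φ x * R.toFun f x} : Submodule ℂ H) : Set H)

/-- `(A, B) = ((a_i), (b_i))` together with the operator `MΘ` form a Beurling pair for the
densely defined multiplier `h`: the map `F ↦ (Σ a_i F_i, Σ b_i F_i)` from `ℓ²(I; H)` to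
`H ⊕ H` is a partial isometry whose range is exactly the graph of `T = M_h`. -/
def IsBeurlingOp (R : CRKHS X H) (h : X → ℂ) {I : Type} (A B : I → X → ℂ)
    (MΘ : lp (fun _ : I => H) 2 →L[ℂ] WithLp 2 (H × H)) : Prop :=
  (∀ (F : lp (fun _ : I => H) 2) (x : X),
      HasSum (fun i => A i x * R.toFun (F i) x)
        (R.toFun ((WithLp.equiv 2 (H × H)) (MΘ F)).1 x) ∧
      HasSum (fun i => B i x * R.toFun (F i) x)
        (R.toFun ((WithLp.equiv 2 (H × H)) (MΘ F)).2 x)) ∧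
  (∀ F : lp (fun _ : I => H) 2, F ∈ (LinearMap.ker (MΘ : lp (fun _ : I => H) 2 →ₗ[ℂ] WithLp 2 (H × H)))ᗮ → ‖MΘ F‖ = ‖F‖) ∧
  (∀ p : H × H, p ∈ (R.mulOp h).graph ↔ ∃ F, (WithLp.equiv 2 (H × H)) (MΘ F) = p)

end CRKHS

/-- Let `h` be a densely defined multiplier of a CNP space with associated
closed operator `T` and adjoint `T*`.  The kernel functions lie in `Dom T*`, and the span of
`{(k_x, T* k_x) : x ∈ X}` is dense in the graph of `T*` inside `H ⊕ H`; i.e. the span of the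
kernel functions is dense in `Dom T*` for the graph norm, hence a core for `T*`. -/
theorem statement5 (X H : Type) [NormedAddCommGroup H] [InnerProductSpace ℂ H] [CompleteSpace H]
    (R : CRKHS X H) (hCNP : R.IsCNP) (h : X → ℂ)
    (hdense : Dense (((R.mulOp h).domain : Submodule ℂ H) : Set H)) :
    ∃ hker : ∀ x : X, R.kernel x ∈ (R.mulOp h).adjoint.domain,
      ((R.mulOp h).adjoint.graph : Set (H × H)) ⊆
        closure ((Submodule.span ℂ {p : H × H |
          ∃ x : X, p = (R.kernel x, (R.mulOp h).adjoint ⟨R.kernel x, hker x⟩)} :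
            Submodule ℂ (H × H)) : Set (H × H)) := by
  classical
  set T := R.mulOp h with hT
  have hkey : ∀ (x : X) (f : T.domain),
      (⟪R.kernel x, (T f : H)⟫ : ℂ) = h x * ⟪R.kernel x, (f : H)⟫ := by
    intro x f
    rw [R.reproducing, R.reproducing, R.mulOp_apply]
  -- The kernel vectors lie in the adjoint domain
  have hker : ∀ x : X, R.kernel x ∈ T.adjoint.domain := by
    intro x
    apply LinearPMap.mem_adjoint_domain_of_exists
    refine ⟨(starRingEnd ℂ) (h x) • R.kernel x, fun f => ?_⟩
    rw [inner_smul_left, Complex.conj_conj, hkey x f]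
  -- and the adjoint acts on them by `k_x ↦ conj (h x) • k_x`
  have hval : ∀ x : X, T.adjoint ⟨R.kernel x, hker x⟩ = (starRingEnd ℂ) (h x) • R.kernel x := by
    intro x
    apply LinearPMap.adjoint_apply_eq hdense
    intro f
    show (⟪(starRingEnd ℂ) (h x) • R.kernel x, (f : H)⟫ : ℂ) = ⟪R.kernel x, (T f : H)⟫
    rw [inner_smul_left, Complex.conj_conj, hkey x f]
  refine ⟨hker, ?_⟩
  -- work in the Hilbert space `WithLp 2 (H × H)`
  set e : WithLp 2 (H × H) ≃L[ℂ] H × H := WithLp.prodContinuousLinearEquiv 2 ℂ H H with he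
  set S : Set (H × H) := {p : H × H |
    ∃ x : X, p = (R.kernel x, T.adjoint ⟨R.kernel x, hker x⟩)} with hS
  set K : Submodule ℂ (WithLp 2 (H × H)) := Submodule.span ℂ (⇑e.symm '' S) with hK
  intro p hp
  -- it suffices to show `e.symm p ∈ closure K`
  have key : e.symm p ∈ Kᗮᗮ := by
    rw [Submodule.mem_orthogonal]
    intro w hw
    obtain ⟨g, hg1, hg2⟩ := T.adjoint.mem_graph_iff.mp hp
    -- the orthogonality relations against the kernel vectors
    have horth : ∀ x : X, R.toFun w.ofLp.1 x + h x * R.toFun w.ofLp.2 x = 0 := by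
      intro x
      have hx : (⟪e.symm (R.kernel x, T.adjoint ⟨R.kernel x, hker x⟩), w⟫ : ℂ) = 0 :=
        hw _ (Submodule.subset_span ⟨_, ⟨x, rfl⟩, rfl⟩)
      rw [WithLp.prod_inner_apply] at hx
      have h1 : (e.symm (R.kernel x, T.adjoint ⟨R.kernel x, hker x⟩)).ofLp.1 = R.kernel x := rfl
      have h2 : (e.symm (R.kernel x, T.adjoint ⟨R.kernel x, hker x⟩)).ofLp.2
          = T.adjoint ⟨R.kernel x, hker x⟩ := rfl
      rw [h1, h2, hval x, inner_smul_left, Complex.conj_conj,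
        R.reproducing, R.reproducing] at hx
      exact hx
    -- hence `w.ofLp.2` lies in the domain of `T` with `T w.ofLp.2 = -w.ofLp.1`
    have hmem : w.ofLp.2 ∈ T.domain := by
      refine ⟨-w.ofLp.1, ?_⟩
      ext x
      simp only [map_neg, Pi.neg_apply]
      linear_combination -(horth x)
    have hTval : T ⟨w.ofLp.2, hmem⟩ = -w.ofLp.1 := by
      apply R.injective
      rw [R.mulOp_apply]
      ext x
      simp only [map_neg, Pi.neg_apply]
      linear_combination horth x
    -- conclude orthogonality to `p = (g, T† g)`
    rw [WithLp.prod_inner_apply]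
    have h1 : (e.symm p).ofLp.1 = p.1 := rfl
    have h2 : (e.symm p).ofLp.2 = p.2 := rfl
    rw [h1, h2, ← hg1, ← hg2]
    have hfa := LinearPMap.adjoint_isFormalAdjoint hdense g ⟨w.ofLp.2, hmem⟩
    have e2 : (⟪w.ofLp.2, (T.adjoint g : H)⟫ : ℂ) = -⟪w.ofLp.1, (g : H)⟫ := by
      calc (⟪w.ofLp.2, (T.adjoint g : H)⟫ : ℂ)
          = (starRingEnd ℂ) ⟪(T.adjoint g : H), ((⟨w.ofLp.2, hmem⟩ : T.domain) : H)⟫ :=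
            (inner_conj_symm _ _).symm
        _ = (starRingEnd ℂ) ⟪(g : H), (T ⟨w.ofLp.2, hmem⟩ : H)⟫ := by rw [hfa]
        _ = ⟪(T ⟨w.ofLp.2, hmem⟩ : H), (g : H)⟫ := inner_conj_symm _ _
        _ = -⟪w.ofLp.1, (g : H)⟫ := by rw [hTval, inner_neg_left]
    rw [e2]
    ring
  rw [Submodule.orthogonal_orthogonal_eq_closure] at key
  -- transfer back through the homeomorphism `e`
  have himg : ∀ z ∈ K, e z ∈ Submodule.span ℂ S := by
    intro z hz
    induction hz using Submodule.span_induction with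
    | mem u hu =>
      obtain ⟨s, hs, rfl⟩ := hu
      simpa using Submodule.subset_span hs
    | zero => simpa using Submodule.zero_mem _
    | add a b _ _ ha hb => simpa [map_add] using Submodule.add_mem _ ha hb
    | smul c a _ ha => simpa [map_smul] using Submodule.smul_mem _ c ha
  have hsub : ⇑e '' (K : Set (WithLp 2 (H × H))) ⊆
      ((Submodule.span ℂ S : Submodule ℂ (H × H)) : Set (H × H)) := by
    rintro _ ⟨z, hz, rfl⟩
    exact himg z hz
  have hcl : e.symm p ∈ closure (K : Set (WithLp 2 (H × H))) := by
    rw [← K.topologicalClosure_coe]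
    exact key
  have hmemp : p ∈ closure (⇑e '' (K : Set (WithLp 2 (H × H)))) := by
    have hc := image_closure_subset_closure_image (s := (K : Set (WithLp 2 (H × H))))
      e.continuous
    exact hc ⟨e.symm p, hcl, by simp⟩
  exact closure_mono hsub hmemp
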